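/- Let B be a finite set of Boolean functions such that the clone [B] generated by B equals BF, the set of all Boolean functions. Then there exist propositional B-formulas f(x,y) and g(x,y) such that f represents the function x ∨ y, g represents the function x ∧ y, and in each of these formulas both variables x and y occur exactly once. -/

import Mathlib

/-- A Boolean function of some arity `n` (arity 0 gives the constant functions). -/
abbrev BFun : Type := Σ n : ℕ, (Fin n → Bool) → Bool

/-- A clone: a set of Boolean functions containing all projections and closed
under composition (superposition). -/
def IsClone (C : Set BFun) : Prop :=
  (∀ (n : ℕ) (k : Fin n), (⟨n, fun b => b k⟩ : BFun) ∈ C) ∧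
  (∀ f ∈ C, ∀ (m : ℕ) (g : Fin (Sigma.fst f) → ((Fin m → Bool) → Bool)),
    (∀ k, (⟨m, g k⟩ : BFun) ∈ C) →
    (⟨m, fun b => f.2 fun k => g k b⟩ : BFun) ∈ C)

/-- `cloneGen B` = `[B]`, the smallest clone containing `B`. -/
def cloneGen (B : Set BFun) : Set BFun := ⋂₀ {C | IsClone C ∧ B ⊆ C}

/-- Propositional formulas over variables `V` with arbitrary Boolean connectives. -/
inductive PForm (V : Type) : Type
  | var : V → PForm V
  | app : (n : ℕ) → ((Fin n → Bool) → Bool) → (Fin n → PForm V) → PForm V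

/-- Evaluation under an assignment `σ`: the Boolean function represented by the formula. -/
def PForm.eval {V : Type} (σ : V → Bool) : PForm V → Bool
  | PForm.var x => σ x
  | PForm.app _ f args => f fun k => PForm.eval σ (args k)

/-- All connectives occurring in the formula come from `B` (a `B`-formula). -/
def PForm.usesFuns {V : Type} (B : Set BFun) : PForm V → Prop
  | PForm.var _ => True
  | PForm.app n f args => (⟨n, f⟩ : BFun) ∈ B ∧ ∀ k, PForm.usesFuns B (args k)

/-- Number of (syntactic) occurrences of the variable `x` in the formula. -/
def PForm.occ {V : Type} [DecidableEq V] (x : V) : PForm V → ℕ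
  | PForm.var y => if y = x then 1 else 0
  | PForm.app _ _ args => ∑ k, PForm.occ x (args k)

/-- The unary Boolean negation function. -/
def notFun : BFun := ⟨1, fun b => ! b 0⟩

/-- The 0-ary constant Boolean function with value `c`. -/
def constFun (c : Bool) : BFun := ⟨0, fun _ => c⟩

/-- The binary Boolean OR function. -/
def orFun : BFun := ⟨2, fun b => b 0 || b 1⟩

/-- The binary Boolean AND function. -/
def andFun : BFun := ⟨2, fun b => b 0 && b 1⟩

/-- The clone M of all monotone Boolean functions. -/
def monotoneFuns : Set BFun :=
  {f : BFun | ∀ a b : Fin f.1 → Bool, (∀ k, a k ≤ b k) → f.2 a ≤ f.2 b}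


/-!
Since `[B]` contains everything, constants are `B`-formulas without variables, and `B` contains a
non-monotone and a non-affine function (the monotone functions and the affine ones, those with
`f (x + y + z) = f x + f y + f z` in the Boolean ring `Bool`, form proper clones). Fixing all
arguments but one of the non-monotone function to suitable constants yields negation. Fixing all
arguments but two of the non-affine one yields a binary function whose four values have odd sum,
because second differences along pairs of coordinates determine all second differences. Up to
negating inputs and output, every binary function with odd value sum is `∧`, and also `∨`; all these
substitutions keep each variable read exactly once.
-/

open Function

namespace PForm

variable {V W : Type}

def subst (s : V → PForm W) : PForm V → PForm W
  | var x => s x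
  | app n f args => app n f fun k => subst s (args k)

theorem eval_subst (σ : W → Bool) (s : V → PForm W) (φ : PForm V) :
    (φ.subst s).eval σ = φ.eval fun v => (s v).eval σ := by
  induction φ with
  | var x => rfl
  | app n f args ih => simp only [subst, eval, ih]

theorem usesFuns_subst {B : Set BFun} {s : V → PForm W} {φ : PForm V} (hφ : φ.usesFuns B)
    (hs : ∀ v, (s v).usesFuns B) : (φ.subst s).usesFuns B := by
  induction φ with
  | var x => exact hs x
  | app n f args ih => exact ⟨hφ.1, fun k => ih k (hφ.2 k)⟩

theorem occ_subst [Fintype V] [DecidableEq V] [DecidableEq W] (x : W) (s : V → PForm W)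
    (φ : PForm V) : (φ.subst s).occ x = ∑ v, φ.occ v * (s v).occ x := by
  induction φ with
  | var y => simp [subst, occ]
  | app n f args ih => simp only [subst, occ, ih, Finset.sum_mul]; exact Finset.sum_comm

end PForm

theorem cloneGen_subset {B C : Set BFun} (hC : IsClone C) (hBC : B ⊆ C) : cloneGen B ⊆ C :=
  Set.sInter_subset_of_mem ⟨hC, hBC⟩

def representableFuns (B : Set BFun) : Set BFun :=
  {f | ∃ φ : PForm (Fin f.1), φ.usesFuns B ∧ ∀ σ, φ.eval σ = f.2 σ}

theorem isClone_representableFuns (B : Set BFun) : IsClone (representableFuns B) := by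
  refine ⟨fun n k => ⟨.var k, trivial, fun σ => rfl⟩, ?_⟩
  rintro f ⟨φ, hφB, hφ⟩ m g hg
  choose ψ hψB hψ using hg
  refine ⟨φ.subst ψ, PForm.usesFuns_subst hφB hψB, fun σ => ?_⟩
  rw [PForm.eval_subst, hφ]
  exact congrArg f.2 (funext fun k => hψ k σ)

theorem subset_representableFuns (B : Set BFun) : B ⊆ representableFuns B :=
  fun f hf => ⟨.app f.1 f.2 .var, ⟨hf, fun _ => trivial⟩, fun _ => rfl⟩

theorem cloneGen_subset_representableFuns (B : Set BFun) : cloneGen B ⊆ representableFuns B :=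
  cloneGen_subset (isClone_representableFuns B) (subset_representableFuns B)

theorem exists_const_formula {B : Set BFun} {c : Bool} (hc : constFun c ∈ representableFuns B)
    (V : Type) [DecidableEq V] :
    ∃ φ : PForm V, φ.usesFuns B ∧ (∀ σ, φ.eval σ = c) ∧ ∀ x, φ.occ x = 0 := by
  obtain ⟨ψ, hψB, hψ⟩ : ∃ ψ : PForm (Fin 0), ψ.usesFuns B ∧ ∀ σ, ψ.eval σ = c := hc
  refine ⟨ψ.subst Fin.elim0, PForm.usesFuns_subst hψB fun v => v.elim0, fun σ => ?_, fun x => ?_⟩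
  · rw [PForm.eval_subst]; exact hψ _
  · simp [PForm.occ_subst]

def HasReadOnceFormula (B : Set BFun) {m : ℕ} (f : (Fin m → Bool) → Bool) : Prop :=
  ∃ φ : PForm (Fin m), φ.usesFuns B ∧ (∀ σ, φ.eval σ = f σ) ∧ ∀ w, φ.occ w = 1

namespace HasReadOnceFormula

variable {B : Set BFun} {m : ℕ}

theorem id : HasReadOnceFormula B fun σ : Fin 1 → Bool => σ 0 :=
  ⟨.var 0, trivial, fun _ => rfl, fun w => by rw [Subsingleton.elim w 0]; rfl⟩

theorem comp {f : (Fin m → Bool) → Bool} {g : Bool → Bool} (hf : HasReadOnceFormula B f)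
    (hg : HasReadOnceFormula B fun σ : Fin 1 → Bool => g (σ 0)) :
    HasReadOnceFormula B fun σ => g (f σ) := by
  obtain ⟨φ, hφB, hφ, hφocc⟩ := hf
  obtain ⟨ψ, hψB, hψ, hψocc⟩ := hg
  refine ⟨ψ.subst fun _ => φ, PForm.usesFuns_subst hψB fun _ => hφB, fun σ => ?_, fun w => ?_⟩
  · rw [PForm.eval_subst, hψ, hφ]
  · simp [PForm.occ_subst, hψocc, hφocc]

theorem precomp {f : (Fin m → Bool) → Bool} {g : Fin m → Bool → Bool}
    (hf : HasReadOnceFormula B f)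
    (hg : ∀ w, HasReadOnceFormula B fun σ : Fin 1 → Bool => g w (σ 0)) :
    HasReadOnceFormula B fun σ => f fun w => g w (σ w) := by
  obtain ⟨φ, hφB, hφ, hφocc⟩ := hf
  choose ψ hψB hψ hψocc using hg
  refine ⟨φ.subst fun w => (ψ w).subst fun _ => .var w,
    PForm.usesFuns_subst hφB fun w => PForm.usesFuns_subst (hψB w) fun _ => trivial,
    fun σ => ?_, fun w => ?_⟩
  · simp only [PForm.eval_subst, hψ, hφ]; rfl
  · simp [PForm.occ_subst, PForm.occ, hψocc, hφocc]

theorem add_const (hneg : HasReadOnceFormula B fun σ : Fin 1 → Bool => !σ 0) (b : Bool) :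
    HasReadOnceFormula B fun σ : Fin 1 → Bool => σ 0 + b := by
  cases b
  · simpa [Bool.add_eq_xor] using (id : HasReadOnceFormula B _)
  · simpa [Bool.add_eq_xor] using hneg

end HasReadOnceFormula

theorem hasReadOnceFormula_extend {B : Set BFun} {F : BFun} (hF : F ∈ B)
    (hconst : ∀ c, constFun c ∈ representableFuns B) {m : ℕ} {ι : Fin m → Fin F.1}
    (hι : Injective ι) (c : Fin F.1 → Bool) :
    HasReadOnceFormula B fun σ => F.2 (extend ι σ c) := by
  choose K hKB hK hKocc using fun b => exists_const_formula (hconst b) (Fin m)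
  refine ⟨.app F.1 F.2 (extend ι .var (K ∘ c)), ⟨hF, fun k => ?_⟩, fun σ => ?_, fun w => ?_⟩
  · by_cases hk : ∃ a, ι a = k
    · obtain ⟨a, rfl⟩ := hk
      rw [hι.extend_apply]
      trivial
    · rw [extend_apply' _ _ _ hk]
      exact hKB _
  · refine congrArg F.2 (funext fun k => ?_)
    rw [apply_extend (PForm.eval σ), show PForm.eval σ ∘ K ∘ c = c from funext fun k => hK _ σ]
    rfl
  · change ∑ k, (extend ι .var (K ∘ c) k).occ w = 1
    simp_rw [apply_extend (PForm.occ w)]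
    rw [← Fintype.sum_of_injective ι hι (fun a => (PForm.var a).occ w) _
      (fun k hk => by rw [extend_apply' _ _ _ hk]; exact hKocc _ w)
      (fun a => (hι.extend_apply (PForm.occ w ∘ PForm.var) _ a).symm)]
    simp [PForm.occ]

theorem isClone_monotoneFuns : IsClone monotoneFuns :=
  ⟨fun _ k _ _ hab => hab k, fun _ hf _ _ hg _ _ hab => hf _ _ fun k => hg k _ _ hab⟩

theorem notFun_not_mem_monotoneFuns : notFun ∉ monotoneFuns :=
  fun h => absurd (h (fun _ => false) (fun _ => true) fun _ => Bool.false_le _) (by decide)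

theorem exists_update_of_not_monotone {ι : Type*} [Fintype ι] [DecidableEq ι]
    {F : (ι → Bool) → Bool} (hF : ¬Monotone F) :
    ∃ c i, F (update c i false) = true ∧ F (update c i true) = false := by
  classical
  let : LocallyFiniteOrder (ι → Bool) := Fintype.toLocallyFiniteOrder
  obtain ⟨a, b, hab, hlt⟩ : ∃ a b, a ⋖ b ∧ ¬F a ≤ F b := by
    simpa [monotone_iff_forall_covBy] using hF
  obtain ⟨i, x, hx, rfl⟩ := Pi.covBy_iff_exists_right_eq.1 hab
  obtain ⟨hai, rfl⟩ : a i = false ∧ x = true := Bool.lt_iff.1 hx.lt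
  obtain ⟨hb, ha⟩ := Bool.lt_iff.1 (not_le.1 hlt)
  refine ⟨a, i, ?_, hb⟩
  rwa [← hai, update_eq_self]

theorem extend_const_eq_update {α β γ : Type*} [Unique α] [DecidableEq β] (i : β) (σ : α → γ)
    (c : β → γ) : extend (fun _ : α => i) σ c = update c i (σ default) := by
  funext k
  rcases eq_or_ne k i with rfl | hk
  · rw [update_self]
    exact (injective_of_subsingleton _).extend_apply σ c default
  · rw [update_of_ne hk, extend_apply']
    rintro ⟨_, rfl⟩
    exact hk rfl

theorem hasReadOnceFormula_not {B : Set BFun} {F : BFun} (hFB : F ∈ B) (hF : F ∉ monotoneFuns)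
    (hconst : ∀ c, constFun c ∈ representableFuns B) :
    HasReadOnceFormula B fun σ : Fin 1 → Bool => !σ 0 := by
  obtain ⟨c, i, h0, h1⟩ := exists_update_of_not_monotone (F := F.2) fun hmono =>
    hF fun _ _ hab => hmono hab
  have hι : Injective fun _ : Fin 1 => i := injective_of_subsingleton _
  convert hasReadOnceFormula_extend hFB hconst hι c using 2 with σ
  rw [extend_const_eq_update]
  cases σ 0 <;> simp [h0, h1]

def affineFuns : Set BFun := {f | ∀ x y z, f.2 (x + y + z) = f.2 x + f.2 y + f.2 z}

theorem isClone_affineFuns : IsClone affineFuns := by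
  refine ⟨fun _ _ _ _ _ => rfl, fun f hf m g hg x y z => ?_⟩
  have hsplit : (fun k => g k (x + y + z)) = (fun k => g k x) + (fun k => g k y) + fun k => g k z :=
    funext fun k => hg k x y z
  exact (congrArg f.2 hsplit).trans (hf _ _ _)

theorem andFun_not_mem_affineFuns : andFun ∉ affineFuns :=
  fun h => absurd (h ![true, false] ![false, true] 0) (by decide)

section SecondDiff

variable {G R : Type*} [AddCommGroup G] [AddCommGroup R]

def secondDiff (F : G → R) (u a b : G) : R := F (u + a + b) - F (u + a) - F (u + b) + F u

theorem secondDiff_comm (F : G → R) (u a b : G) : secondDiff F u a b = secondDiff F u b a := by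
  rw [secondDiff, secondDiff, add_right_comm u a b]
  abel

theorem secondDiff_zero_left (F : G → R) (u b : G) : secondDiff F u 0 b = 0 := by
  simp [secondDiff]

theorem secondDiff_add_left (F : G → R) (u a a' b : G) :
    secondDiff F u (a + a') b = secondDiff F u a b + secondDiff F (u + a) a' b := by
  simp only [secondDiff, add_assoc]
  abel

theorem secondDiff_eq_zero_of_single {ι M : Type*} [Finite ι] [DecidableEq ι] [AddCommGroup M]
    {F : (ι → M) → R} (h : ∀ u i j m m', secondDiff F u (Pi.single i m) (Pi.single j m') = 0)
    (u a b : ι → M) : secondDiff F u a b = 0 := by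
  have key : ∀ b, (∀ u i m, secondDiff F u (Pi.single i m) b = 0) →
      ∀ u a, secondDiff F u a b = 0 := by
    intro b hb u a
    induction a using Pi.single_induction generalizing u with
    | zero => exact secondDiff_zero_left F u b
    | add a a' ha ha' => rw [secondDiff_add_left, ha, ha', add_zero]
    | single i m => exact hb u i m
  refine key b (fun u i m => ?_) u a
  rw [secondDiff_comm]
  exact key _ (fun u j m' => h u j i m' m) u b

end SecondDiff

theorem mem_affineFuns_of_secondDiff_eq_zero {f : BFun} (h : ∀ u a b, secondDiff f.2 u a b = 0) :
    f ∈ affineFuns := by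
  intro x y z
  have hxyz := h y (x - y) (z - y)
  have hsum : y + (x - y) + (z - y) = x + y + z := by
    rw [add_sub_cancel, add_assoc, add_comm y]; rfl
  rw [secondDiff, hsum, add_sub_cancel, add_sub_cancel] at hxyz
  have hBool : ∀ p q r s : Bool, p - q - r + s = 0 → p = q + s + r := by decide
  exact hBool _ _ _ _ hxyz

theorem exists_secondDiff_single_eq_one {ι : Type*} [Finite ι] [DecidableEq ι]
    {F : (ι → Bool) → Bool} (hF : ∃ u a b, secondDiff F u a b ≠ 0) :
    ∃ u i j, i ≠ j ∧ secondDiff F u (Pi.single i 1) (Pi.single j 1) = 1 := by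
  by_contra! h
  obtain ⟨u, a, b, hne⟩ := hF
  refine hne (secondDiff_eq_zero_of_single (fun u i j m m' => ?_) u a b)
  have single_false : ∀ k : ι, (Pi.single k false : ι → Bool) = 0 := Pi.single_zero
  rcases Bool.eq_false_or_eq_true m with rfl | rfl
  · rcases Bool.eq_false_or_eq_true m' with rfl | rfl
    · obtain rfl | hij := eq_or_ne i j
      · have hee : Pi.single i true + Pi.single i true = (0 : ι → Bool) :=
          funext fun _ => BooleanRing.add_self _
        rw [secondDiff, add_assoc, hee, add_zero, sub_sub, BooleanRing.add_self, sub_zero,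
          BooleanRing.add_self]
      · exact (Bool.eq_false_or_eq_true _).resolve_left (h u i j hij)
    · rw [secondDiff_comm, single_false]
      exact secondDiff_zero_left _ _ _
  · rw [single_false]
    exact secondDiff_zero_left _ _ _

def cornerSum (h : Bool → Bool → Bool) : Bool := h 0 0 + h 0 1 + h 1 0 + h 1 1

theorem cornerSum_comp_add (h : Bool → Bool → Bool) (p q : Bool) :
    cornerSum (fun x y => h (x + p) (y + q)) = cornerSum h := by
  revert h p q
  decide

theorem exists_add_eq_of_cornerSum_eq_one {h h' : Bool → Bool → Bool} (hh : cornerSum h = 1)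
    (hh' : cornerSum h' = 1) : ∃ p q d, ∀ x y, h (x + p) (y + q) + d = h' x y := by
  revert h h'
  decide

theorem exists_hasReadOnceFormula_cornerSum_eq_one {B : Set BFun} {F : BFun} (hFB : F ∈ B)
    (hF : F ∉ affineFuns) (hconst : ∀ c, constFun c ∈ representableFuns B) :
    ∃ h, cornerSum h = 1 ∧ HasReadOnceFormula B fun σ : Fin 2 → Bool => h (σ 0) (σ 1) := by
  obtain ⟨u, i, j, hij, hodd⟩ := exists_secondDiff_single_eq_one (F := F.2) <| by
    by_contra! h
    exact hF (mem_affineFuns_of_secondDiff_eq_zero h)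
  have hι : Injective ![i, j] := by
    intro a b
    fin_cases a <;> fin_cases b <;> simp [hij, hij.symm]
  refine ⟨fun x y => F.2 (extend ![i, j] ![x, y] u), ?_, ?_⟩
  -- The four values of `h` are those of `F` on the face through `u` spanned by `i` and `j`.
  · have hface : ∀ x y,
        extend ![i, j] ![x + u i, y + u j] u = u + Pi.single i x + Pi.single j y := by
      intro x y
      funext k
      rcases eq_or_ne k i with rfl | hki
      · rw [show extend ![k, j] ![x + u k, y + u j] u k = x + u k from hι.extend_apply _ u 0]
        simp [hij, add_comm]
      rcases eq_or_ne k j with rfl | hkj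
      · rw [show extend ![i, k] ![x + u i, y + u k] u k = y + u k from hι.extend_apply _ u 1]
        simp [hki, add_comm]
      rw [extend_apply']
      · simp [hki, hkj]
      · rintro ⟨a, rfl⟩
        fin_cases a <;> simp_all
    rw [← cornerSum_comp_add _ (u i) (u j)]
    simp only [hface, cornerSum, Pi.single_zero, add_zero]
    refine Eq.trans ?_ hodd
    rw [secondDiff, BooleanRing.sub_eq_add, BooleanRing.sub_eq_add]
    abel
  · convert hasReadOnceFormula_extend hFB hconst hι u using 2 with σ
    dsimp only
    rw [show ![σ 0, σ 1] = σ by ext k; fin_cases k <;> rfl]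

theorem HasReadOnceFormula.of_cornerSum_eq_one {B : Set BFun} {h h' : Bool → Bool → Bool}
    (hh : HasReadOnceFormula B fun σ : Fin 2 → Bool => h (σ 0) (σ 1))
    (hodd : cornerSum h = 1) (hneg : HasReadOnceFormula B fun σ : Fin 1 → Bool => !σ 0)
    (hodd' : cornerSum h' = 1) : HasReadOnceFormula B fun σ : Fin 2 → Bool => h' (σ 0) (σ 1) := by
  obtain ⟨p, q, d, hpqd⟩ := exists_add_eq_of_cornerSum_eq_one hodd hodd'
  have := (hh.precomp (g := fun w x => x + ![p, q] w) fun w => add_const hneg _).comp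
    (g := (· + d)) (add_const hneg d)
  simpa [hpqd] using this

theorem stmt18_general (B : Set BFun) (hBF : cloneGen B = Set.univ) :
    ∃ f g : PForm (Fin 2),
      PForm.usesFuns B f ∧ (∀ σ : Fin 2 → Bool, PForm.eval σ f = (σ 0 || σ 1)) ∧
        PForm.occ (0 : Fin 2) f = 1 ∧ PForm.occ (1 : Fin 2) f = 1 ∧
      PForm.usesFuns B g ∧ (∀ σ : Fin 2 → Bool, PForm.eval σ g = (σ 0 && σ 1)) ∧
        PForm.occ (0 : Fin 2) g = 1 ∧ PForm.occ (1 : Fin 2) g = 1 := by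
  have hall : ∀ f, f ∈ cloneGen B := fun f => hBF ▸ Set.mem_univ f
  have hconst c : constFun c ∈ representableFuns B := cloneGen_subset_representableFuns B (hall _)
  obtain ⟨F, hFB, hF⟩ : ∃ F ∈ B, F ∉ monotoneFuns := by
    by_contra! hB
    exact notFun_not_mem_monotoneFuns (cloneGen_subset isClone_monotoneFuns hB (hall _))
  obtain ⟨G, hGB, hG⟩ : ∃ G ∈ B, G ∉ affineFuns := by
    by_contra! hB
    exact andFun_not_mem_affineFuns (cloneGen_subset isClone_affineFuns hB (hall _))
  have hneg := hasReadOnceFormula_not hFB hF hconst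
  obtain ⟨h, hodd, hh⟩ := exists_hasReadOnceFormula_cornerSum_eq_one hGB hG hconst
  obtain ⟨f, hfB, hf, hfocc⟩ := hh.of_cornerSum_eq_one hodd hneg (h' := (· || ·)) rfl
  obtain ⟨g, hgB, hg, hgocc⟩ := hh.of_cornerSum_eq_one hodd hneg (h' := (· && ·)) rfl
  exact ⟨f, g, hfB, hf, hfocc 0, hfocc 1, hgB, hg, hgocc 0, hgocc 1⟩

/-- If `B` is a finite set of Boolean functions with `[B] = BF` (all
Boolean functions), then there are `B`-formulas `f(x,y)` and `g(x,y)` (variables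
`V = Fin 2`) representing `x ∨ y` and `x ∧ y` respectively, in each of which both
variables occur exactly once. -/
theorem stmt18 (B : Set BFun) (hfin : B.Finite) (hBF : cloneGen B = Set.univ) :
    ∃ f g : PForm (Fin 2),
      PForm.usesFuns B f ∧ (∀ σ : Fin 2 → Bool, PForm.eval σ f = (σ 0 || σ 1)) ∧
        PForm.occ (0 : Fin 2) f = 1 ∧ PForm.occ (1 : Fin 2) f = 1 ∧
      PForm.usesFuns B g ∧ (∀ σ : Fin 2 → Bool, PForm.eval σ g = (σ 0 && σ 1)) ∧
        PForm.occ (0 : Fin 2) g = 1 ∧ PForm.occ (1 : Fin 2) g = 1 :=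
  stmt18_general B hBF
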